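/- Every ℝ-linear map f : ℍ → ℍ has a unique expansion f(x) = a₀·x + a₁·I(x) + a₂·J(x) + a₃·K(x) for all x ∈ ℍ, where a₀, a₁, a₂, a₃ are quaternions multiplied on the left, I(x) = i x i⁻¹, J(x) = j x j⁻¹, and K(x) = k x k⁻¹. -/

import Mathlib

/-!
Conjugation by `i`, `j`, `k` acts diagonally on the real basis `1, i, j, k`, with signs given
by the character table of the Klein four-group. Evaluating the expansion at `e ∈ {1, i, j, k}`
therefore gives `f e * e⁻¹ = (±a₀ ± a₁ ± a₂ ± a₃)`, a linear system in `(a₀, a₁, a₂, a₃)` whose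
matrix `H` is a 4 × 4 Hadamard matrix. Since `H * H = 4`, the system has exactly one solution,
and a linear map on `ℍ` is determined by its values on the basis.
-/

open Quaternion Matrix

noncomputable def quatBasis : Module.Basis (Fin 4) ℝ ℍ[ℝ] :=
  QuaternionAlgebra.basisOneIJK (-1 : ℝ) 0 (-1)

noncomputable def qi : ℍ[ℝ] := ⟨0, 1, 0, 0⟩
noncomputable def qj : ℍ[ℝ] := ⟨0, 0, 1, 0⟩
noncomputable def qk : ℍ[ℝ] := ⟨0, 0, 0, 1⟩

theorem existsUnique_hadamard_solution {K M : Type*} [Field K] [NeZero (2 : K)]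
    [AddCommGroup M] [Module K M] (y₀ y₁ y₂ y₃ : M) :
    ∃! p : M × M × M × M,
      p.1 + p.2.1 + p.2.2.1 + p.2.2.2 = y₀ ∧ p.1 + p.2.1 - p.2.2.1 - p.2.2.2 = y₁ ∧
        p.1 - p.2.1 + p.2.2.1 - p.2.2.2 = y₂ ∧ p.1 - p.2.1 - p.2.2.1 + p.2.2.2 = y₃ := by
  have h4 : (4 : K) ≠ 0 := by
    rw [show (4 : K) = 2 * 2 by norm_num]
    exact mul_ne_zero two_ne_zero two_ne_zero
  refine ⟨((4 : K)⁻¹ • (y₀ + y₁ + y₂ + y₃), (4 : K)⁻¹ • (y₀ + y₁ - y₂ - y₃),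
    (4 : K)⁻¹ • (y₀ - y₁ + y₂ - y₃), (4 : K)⁻¹ • (y₀ - y₁ - y₂ + y₃)), ?_, ?_⟩
  · refine ⟨?_, ?_, ?_, ?_⟩ <;> match_scalars <;> field_simp <;> ring
  · rintro ⟨a, b, c, d⟩ ⟨rfl, rfl, rfl, rfl⟩
    ext <;> match_scalars <;> field_simp <;> ring

@[simp] theorem qi_re : qi.re = 0 := rfl
@[simp] theorem qi_imI : qi.imI = 1 := rfl
@[simp] theorem qi_imJ : qi.imJ = 0 := rfl
@[simp] theorem qi_imK : qi.imK = 0 := rfl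

@[simp] theorem qj_re : qj.re = 0 := rfl
@[simp] theorem qj_imI : qj.imI = 0 := rfl
@[simp] theorem qj_imJ : qj.imJ = 1 := rfl
@[simp] theorem qj_imK : qj.imK = 0 := rfl

@[simp] theorem qk_re : qk.re = 0 := rfl
@[simp] theorem qk_imI : qk.imI = 0 := rfl
@[simp] theorem qk_imJ : qk.imJ = 0 := rfl
@[simp] theorem qk_imK : qk.imK = 1 := rfl

theorem qi_ne_zero : qi ≠ 0 := ne_of_apply_ne QuaternionAlgebra.imI (by simp)
theorem qj_ne_zero : qj ≠ 0 := ne_of_apply_ne QuaternionAlgebra.imJ (by simp)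
theorem qk_ne_zero : qk ≠ 0 := ne_of_apply_ne QuaternionAlgebra.imK (by simp)

section

attribute [local simp] Quaternion.re_mul Quaternion.imI_mul Quaternion.imJ_mul Quaternion.imK_mul

theorem qi_mul_mul_inv (x : ℍ[ℝ]) : qi * x * qi⁻¹ = ⟨x.re, x.imI, -x.imJ, -x.imK⟩ := by
  rw [show qi⁻¹ = -qi from inv_eq_of_mul_eq_one_right (by ext <;> simp)]
  ext <;> simp

theorem qj_mul_mul_inv (x : ℍ[ℝ]) : qj * x * qj⁻¹ = ⟨x.re, -x.imI, x.imJ, -x.imK⟩ := by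
  rw [show qj⁻¹ = -qj from inv_eq_of_mul_eq_one_right (by ext <;> simp)]
  ext <;> simp

theorem qk_mul_mul_inv (x : ℍ[ℝ]) : qk * x * qk⁻¹ = ⟨x.re, -x.imI, -x.imJ, x.imK⟩ := by
  rw [show qk⁻¹ = -qk from inv_eq_of_mul_eq_one_right (by ext <;> simp)]
  ext <;> simp

end

theorem quaternion_linearMap_ext {M : Type*} [AddCommMonoid M] [Module ℝ M]
    {f g : ℍ[ℝ] →ₗ[ℝ] M} (h₁ : f 1 = g 1) (hi : f qi = g qi) (hj : f qj = g qj)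
    (hk : f qk = g qk) : f = g := by
  ext x
  have hx : x = x.re • 1 + x.imI • qi + x.imJ • qj + x.imK • qk := by
    ext <;> simp
  rw [hx]
  simp only [map_add, map_smul, h₁, hi, hj, hk]

noncomputable def quatExpansion (p : ℍ[ℝ] × ℍ[ℝ] × ℍ[ℝ] × ℍ[ℝ]) : ℍ[ℝ] →ₗ[ℝ] ℍ[ℝ] where
  toFun x := p.1 * x + p.2.1 * (qi * x * qi⁻¹) + p.2.2.1 * (qj * x * qj⁻¹)
    + p.2.2.2 * (qk * x * qk⁻¹)
  map_add' x y := by simp only [mul_add, add_mul]; abel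
  map_smul' r x := by simp only [mul_smul_comm, smul_mul_assoc, smul_add, RingHom.id_apply]

theorem quatExpansion_one (a b c d : ℍ[ℝ]) : quatExpansion (a, b, c, d) 1 = a + b + c + d := by
  simp [quatExpansion, qi_ne_zero, qj_ne_zero, qk_ne_zero]

theorem quatExpansion_qi (a b c d : ℍ[ℝ]) :
    quatExpansion (a, b, c, d) qi = (a + b - c - d) * qi := by
  have hi : qi * qi * qi⁻¹ = qi := by rw [qi_mul_mul_inv]; ext <;> simp
  have hj : qj * qi * qj⁻¹ = -qi := by rw [qj_mul_mul_inv]; ext <;> simp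
  have hk : qk * qi * qk⁻¹ = -qi := by rw [qk_mul_mul_inv]; ext <;> simp
  simp only [quatExpansion, LinearMap.coe_mk, AddHom.coe_mk, hi, hj, hk]
  noncomm_ring

theorem quatExpansion_qj (a b c d : ℍ[ℝ]) :
    quatExpansion (a, b, c, d) qj = (a - b + c - d) * qj := by
  have hi : qi * qj * qi⁻¹ = -qj := by rw [qi_mul_mul_inv]; ext <;> simp
  have hj : qj * qj * qj⁻¹ = qj := by rw [qj_mul_mul_inv]; ext <;> simp
  have hk : qk * qj * qk⁻¹ = -qj := by rw [qk_mul_mul_inv]; ext <;> simp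
  simp only [quatExpansion, LinearMap.coe_mk, AddHom.coe_mk, hi, hj, hk]
  noncomm_ring

theorem quatExpansion_qk (a b c d : ℍ[ℝ]) :
    quatExpansion (a, b, c, d) qk = (a - b - c + d) * qk := by
  have hi : qi * qk * qi⁻¹ = -qk := by rw [qi_mul_mul_inv]; ext <;> simp
  have hj : qj * qk * qj⁻¹ = -qk := by rw [qj_mul_mul_inv]; ext <;> simp
  have hk : qk * qk * qk⁻¹ = qk := by rw [qk_mul_mul_inv]; ext <;> simp
  simp only [quatExpansion, LinearMap.coe_mk, AddHom.coe_mk, hi, hj, hk]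
  noncomm_ring

theorem quatExpansion_eq_iff (f : ℍ[ℝ] →ₗ[ℝ] ℍ[ℝ]) (a b c d : ℍ[ℝ]) :
    quatExpansion (a, b, c, d) = f ↔
      a + b + c + d = f 1 ∧ a + b - c - d = f qi * qi⁻¹ ∧
        a - b + c - d = f qj * qj⁻¹ ∧ a - b - c + d = f qk * qk⁻¹ := by
  simp only [eq_mul_inv_iff_mul_eq₀ qi_ne_zero, eq_mul_inv_iff_mul_eq₀ qj_ne_zero,
    eq_mul_inv_iff_mul_eq₀ qk_ne_zero, ← quatExpansion_one, ← quatExpansion_qi,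
    ← quatExpansion_qj, ← quatExpansion_qk]
  exact ⟨fun h => h ▸ ⟨rfl, rfl, rfl, rfl⟩,
    fun ⟨h₁, hi, hj, hk⟩ => quaternion_linearMap_ext h₁ hi hj hk⟩

/-- Every ℝ-linear map `f : ℍ → ℍ` has a unique expansion
`f x = a₀ * x + a₁ * I x + a₂ * J x + a₃ * K x`. -/
theorem stmt11 (f : ℍ[ℝ] →ₗ[ℝ] ℍ[ℝ]) :
    ∃! p : ℍ[ℝ] × ℍ[ℝ] × ℍ[ℝ] × ℍ[ℝ],
      ∀ x : ℍ[ℝ],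
        f x = p.1 * x + p.2.1 * (qi * x * qi⁻¹) + p.2.2.1 * (qj * x * qj⁻¹)
          + p.2.2.2 * (qk * x * qk⁻¹) := by
  refine (existsUnique_congr fun p => ?_).mp <| existsUnique_hadamard_solution (K := ℝ)
    (f 1) (f qi * qi⁻¹) (f qj * qj⁻¹) (f qk * qk⁻¹)
  obtain ⟨a, b, c, d⟩ := p
  rw [← quatExpansion_eq_iff, LinearMap.ext_iff]
  exact forall_congr' fun x => eq_comm
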